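/- (Proposition 4: cardinality bound for the multi-source inner bound.) The region R_i is unchanged if one additionally requires that each auxiliary random variable U_k take at most |𝒳_k| + 4^K values, for every k ∈ {1,…,K}. -/

import Mathlib

open scoped BigOperators Classical

namespace Biclustering

variable {α β γ σ : Type*}

/-- A probability mass function on a finite type. -/
def IsPMF [Fintype α] (p : α → ℝ) : Prop := (∀ a, 0 ≤ p a) ∧ ∑ a, p a = 1

/-- Shannon entropy (in nats) of a pmf on a finite type. -/
noncomputable def ent [Fintype α] (p : α → ℝ) : ℝ := - ∑ a, p a * Real.log (p a)

/-- Pushforward (distribution of `f` under `p`). -/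
noncomputable def pmap [Fintype α] (f : α → β) (p : α → ℝ) : β → ℝ :=
  fun b => ∑ a, if f a = b then p a else 0

/-- Entropy of the random variable `f` under the joint pmf `p`. -/
noncomputable def Hof [Fintype α] [Fintype β] (p : α → ℝ) (f : α → β) : ℝ := ent (pmap f p)

/-- Mutual information `I(f; g)` under the joint pmf `p`. -/
noncomputable def MI [Fintype α] [Fintype β] [Fintype γ] (p : α → ℝ) (f : α → β) (g : α → γ) : ℝ :=
  Hof p f + Hof p g - Hof p (fun a => (f a, g a))

/-- Conditional mutual information `I(f; g | m)` under the joint pmf `p`. -/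
noncomputable def CMI [Fintype α] [Fintype β] [Fintype γ] [Fintype σ]
    (p : α → ℝ) (f : α → β) (g : α → γ) (m : α → σ) : ℝ :=
  Hof p (fun a => (f a, m a)) + Hof p (fun a => (g a, m a))
    - Hof p (fun a => (f a, g a, m a)) - Hof p m

/-- `f` and `g` are conditionally independent given `m` (a Markov chain `f – m – g`). -/
def CondIndep [Fintype α] (p : α → ℝ) (f : α → β) (g : α → γ) (m : α → σ) : Prop :=
  ∀ b c s, pmap (fun a => (f a, g a, m a)) p (b, c, s) * pmap m p s
    = pmap (fun a => (f a, m a)) p (b, s) * pmap (fun a => (g a, m a)) p (c, s)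

/-- The pmf of `n` i.i.d. copies of a source with pmf `p`. -/
noncomputable def iid [Fintype α] (n : ℕ) (p : α → ℝ) : (Fin n → α) → ℝ :=
  fun x => ∏ i, p (x i)

/-- The index set `Ω`: pairs of nonempty disjoint subsets of `{1, …, K}`. -/
def Omega (K : ℕ) : Type :=
  {AB : Finset (Fin K) × Finset (Fin K) // AB.1.Nonempty ∧ AB.2.Nonempty ∧ Disjoint AB.1 AB.2}

variable {K : ℕ}

/-- Restriction of a tuple to the coordinates in a subset `A`. -/
def restr {𝒯 : Fin K → Type} (A : Finset (Fin K)) (x : ∀ k, 𝒯 k) :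
    ∀ k : {k // k ∈ A}, 𝒯 k.1 :=
  fun k => x k.1

variable {𝒳 : Fin K → Type} [∀ k, Fintype (𝒳 k)]

/-- `(μ_Ω, R_K)` is achievable for the multi-source biclustering problem with source pmf `p`. -/
def AchievableM (p : (∀ k, 𝒳 k) → ℝ) (μ : Omega K → ℝ) (R : Fin K → ℝ) : Prop :=
  ∃ (n : ℕ) (M : Fin K → ℕ) (f : ∀ k, (Fin n → 𝒳 k) → Fin (M k)),
    0 < n ∧ (∀ k, Real.log (M k) ≤ n * R k) ∧
    ∀ AB : Omega K,
      μ AB ≤ (MI (iid n p)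
        (fun ω => fun k : {k // k ∈ AB.1.1} => f k.1 (fun i => ω i k.1))
        (fun ω => fun k : {k // k ∈ AB.1.2} => f k.1 (fun i => ω i k.1))) / n

/-- The Markov-structure requirement for the inner bound: `q` is a joint pmf of
`(U_1, …, U_K, X_1, …, X_K)` with `X`-marginal `p` such that for every `k`, the auxiliary
`U_k` is conditionally independent of `(X_{K∖k}, U_{K∖k})` given `X_k`. -/
def InnerWitnessM {𝒰 : Fin K → Type} [∀ k, Fintype (𝒰 k)]
    (p : (∀ k, 𝒳 k) → ℝ) (q : ((∀ k, 𝒰 k) × (∀ k, 𝒳 k)) → ℝ) : Prop :=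
  IsPMF q ∧ pmap Prod.snd q = p ∧
    ∀ k : Fin K,
      CondIndep q (fun w => w.1 k)
        (fun w => (fun j : {j : Fin K // j ≠ k} => w.2 j.1,
                   fun j : {j : Fin K // j ≠ k} => w.1 j.1))
        (fun w => w.2 k)

/-- The binning rate/relevance constraints of the inner bound `R_i` for a point
`t = (μ_Ω, R_K)`. -/
def InnerIneqM {𝒰 : Fin K → Type} [∀ k, Fintype (𝒰 k)]
    (q : ((∀ k, 𝒰 k) × (∀ k, 𝒳 k)) → ℝ)
    (t : (Omega K → ℝ) × (Fin K → ℝ)) : Prop :=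
  ∀ AB : Omega K, ∃ Aa Ab Ba Bb : Finset (Fin K),
    Ab ⊆ Aa ∧ Aa ⊆ AB.1.1 ∧ Bb ⊆ Ba ∧ Ba ⊆ AB.1.2 ∧
    (∀ A' ⊆ Aa, (A' ∩ Ab).Nonempty →
      CMI q (fun w => restr A' w.2) (fun w => restr A' w.1)
          (fun w => restr (Aa \ A') w.1)
        ≤ ∑ k ∈ A', t.2 k) ∧
    (∀ B' ⊆ Ba, (B' ∩ Bb).Nonempty →
      CMI q (fun w => restr B' w.2) (fun w => restr B' w.1)
          (fun w => restr (Ba \ B') w.1)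
        ≤ ∑ k ∈ B', t.2 k) ∧
    t.1 AB ≤ MI q (fun w => restr Ab w.1) (fun w => restr Bb w.1)

/-- The multi-source inner-bound region `R_i`. -/
def RiM (p : (∀ k, 𝒳 k) → ℝ) : Set ((Omega K → ℝ) × (Fin K → ℝ)) :=
  { t | ∃ (𝒰 : Fin K → Type) (_ : ∀ k, Fintype (𝒰 k))
      (q : ((∀ k, 𝒰 k) × (∀ k, 𝒳 k)) → ℝ),
      InnerWitnessM p q ∧ InnerIneqM q t }


/-- The multi-source inner-bound region `R_i` with the additional cardinality constraint
`|𝒰_k| ≤ |𝒳_k| + 4^K` for every `k`. -/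
def RiMBounded (p : (∀ k, 𝒳 k) → ℝ) : Set ((Omega K → ℝ) × (Fin K → ℝ)) :=
  { t | ∃ c : Fin K → ℕ, (∀ k, c k ≤ Fintype.card (𝒳 k) + 4 ^ K) ∧
      ∃ q : ((∀ k, Fin (c k)) × (∀ k, 𝒳 k)) → ℝ,
        InnerWitnessM p q ∧ InnerIneqM q t }

/-!
Fix `k0` and let `Y` be everything except `U_k0`. The Markov condition at `k0` factors `q` as
`P(u_k0) P(x_k0 | u_k0) P(y | x_k0)`. Hence multiplying `q` by a weight `θ(u_k0) ≥ 0` with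
`∑_b θ_b P(U_k0 = b, X_k0 = x) = P(X_k0 = x)` preserves the law of `Y`, every Markov condition
and every entropy `H(X_S, U_T)` with `k0 ∉ T`. For `k0 ∈ T` the chain rule gives
`H(X_S, U_T) = H(U_k0) + ∑_b P(b) H(X_S, U_T | U_k0 = b)`, and reweighting leaves the conditional
entropies unchanged. Carathéodory's theorem for the vectors
`(P(X_k0 | U_k0 = b), (H(X_S, U_T | U_k0 = b))_{S, T ∋ k0})`, which live in dimension
`|𝒳_k0| + 2^K 2^(K-1) < |𝒳_k0| + 4^K`, gives such a `θ` that also preserves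
`∑_b P(b) H(X_S, U_T | U_k0 = b)` and has at most `|𝒳_k0| + 4^K` nonzero entries. So every
entropy with `k0 ∈ T` shifts by the same constant `H'(U_k0) - H(U_k0)`, which cancels in all rate
and relevance constraints. Doing this for each `k` in turn and then restricting every `U_k` to
its support gives the bounded alphabets.
-/

open Function

set_option linter.unusedSectionVars false

section Pushforward

variable {α α' β β' γ : Type*} [Fintype α]

lemma pmap_nonneg {p : α → ℝ} (hp : ∀ a, 0 ≤ p a) (f : α → β) (b : β) : 0 ≤ pmap f p b :=
  Finset.sum_nonneg fun a _ => by split_ifs <;> simp [hp a]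

lemma sum_pmap [Fintype β] (f : α → β) (p : α → ℝ) : ∑ b, pmap f p b = ∑ a, p a := by
  unfold pmap
  rw [Finset.sum_comm]
  simp

lemma pmap_comp [Fintype β] (f : α → β) (g : β → γ) (p : α → ℝ) :
    pmap (fun a => g (f a)) p = pmap g (pmap f p) := by
  funext c
  unfold pmap
  have h : ∀ b : β, (if g b = c then ∑ a, if f a = b then p a else 0 else 0)
      = ∑ a, if f a = b then (if g b = c then p a else 0) else 0 := by
    intro b; split <;> simp
  rw [Finset.sum_congr rfl fun b _ => h b, Finset.sum_comm]
  refine Finset.sum_congr rfl fun a _ => ?_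
  simp

lemma pmap_apply_of_injective {f : α → β} (hf : Injective f) (p : α → ℝ) (a : α) :
    pmap f p (f a) = p a := by
  simp [pmap, hf.eq_iff]

lemma pmap_equiv_apply (E : α ≃ β) (p : α → ℝ) (b : β) : pmap E p b = p (E.symm b) := by
  simpa using pmap_apply_of_injective E.injective p (E.symm b)

lemma pmap_fst_apply [Fintype β] [Fintype γ] (P : β × γ → ℝ) (b : β) :
    pmap Prod.fst P b = ∑ c, P (b, c) := by
  unfold pmap
  rw [Fintype.sum_prod_type, Finset.sum_comm]
  simp

lemma pmap_snd_apply [Fintype β] [Fintype γ] (P : β × γ → ℝ) (c : γ) :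
    pmap Prod.snd P c = ∑ b, P (b, c) := by
  unfold pmap
  rw [Fintype.sum_prod_type]
  simp

lemma apply_le_pmap {p : α → ℝ} (hp : ∀ a, 0 ≤ p a) (f : α → β) (a : α) :
    p a ≤ pmap f p (f a) :=
  calc p a = if f a = f a then p a else 0 := (if_pos rfl).symm
    _ ≤ pmap f p (f a) := Finset.single_le_sum (f := fun a' => if f a' = f a then p a' else 0)
        (fun a' _ => by split_ifs <;> simp [hp a']) (Finset.mem_univ a)

lemma pmap_pair_le {p : α → ℝ} (hp : ∀ a, 0 ≤ p a) (f : α → β) (g : α → γ) (b : β) (c : γ) :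
    pmap (fun a => (f a, g a)) p (b, c) ≤ pmap f p b :=
  Finset.sum_le_sum fun a _ => by
    by_cases h : f a = b <;> by_cases h' : g a = c <;> simp [h, h', hp a]

lemma pmap_mul_comp {p p' : α → ℝ} {f : α → β} {φ : β → ℝ} (hp' : ∀ a, p' a = φ (f a) * p a)
    (b : β) : pmap f p' b = φ b * pmap f p b := by
  unfold pmap
  rw [Finset.mul_sum]
  refine Finset.sum_congr rfl fun a _ => ?_
  split_ifs with h
  · rw [hp', h]
  · rw [mul_zero]

lemma pmap_eq_zero_of_imp {p p' : α → ℝ} (hp : ∀ a, 0 ≤ p a) (hp' : ∀ a, p a = 0 → p' a = 0)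
    {f : α → β} {b : β} (hb : pmap f p b = 0) : pmap f p' b = 0 :=
  Finset.sum_eq_zero fun a _ => by
    split_ifs with h
    · have hle := apply_le_pmap hp f a
      rw [h, hb] at hle
      exact hp' a (le_antisymm hle (hp a))
    · rfl

variable [Fintype α']

lemma pmap_comp_of_injective {E : α' → α} (hE : Injective E) {p : α → ℝ}
    (hp : ∀ a, p a ≠ 0 → a ∈ Set.range E) (h : α → β) :
    pmap (fun a' => h (E a')) (fun a' => p (E a')) = pmap h p := by
  funext b
  refine Fintype.sum_of_injective E hE _ _ (fun a ha => ?_) (fun _ => rfl)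
  by_cases hpa : p a = 0
  · simp [hpa]
  · exact absurd (hp a hpa) ha

lemma pmap_apply_of_semiconj [Fintype β'] {E : α' → α} (hE : Injective E) {p : α → ℝ}
    (hp : ∀ a, p a ≠ 0 → a ∈ Set.range E) {f : α → β} {f' : α' → β'} {e : β' → β}
    (he : Injective e) (hf : ∀ a', f (E a') = e (f' a')) (b : β') :
    pmap f' (fun a' => p (E a')) b = pmap f p (e b) :=
  calc pmap f' (fun a' => p (E a')) b = pmap e (pmap f' fun a' => p (E a')) (e b) :=
        (pmap_apply_of_injective he _ b).symm
    _ = pmap (fun a' => f (E a')) (fun a' => p (E a')) (e b) := by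
        simp only [hf, pmap_comp]
    _ = pmap f p (e b) := by rw [pmap_comp_of_injective hE hp]

end Pushforward

section Entropy

variable {α α' β β' γ σ : Type*} [Fintype α]

lemma ent_pmap_of_injective [Fintype β] {f : α → β} (hf : Injective f) (p : α → ℝ) :
    ent (pmap f p) = ent p := by
  unfold ent
  congr 1
  rw [← Finset.sum_subset (Finset.subset_univ (Finset.univ.image f)),
    Finset.sum_image fun a _ a' _ h => hf h]
  · exact Finset.sum_congr rfl fun a _ => by rw [pmap_apply_of_injective hf]
  · intro b _ hb
    have : pmap f p b = 0 := Finset.sum_eq_zero fun a _ => by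
      rw [if_neg fun h => hb (Finset.mem_image.2 ⟨a, Finset.mem_univ a, h⟩)]
    simp [this]

lemma Hof_comp_of_injective [Fintype β] [Fintype γ] (p : α → ℝ) {f : α → β} {g : α → γ}
    {e : β → γ} (he : Injective e) (hg : ∀ a, g a = e (f a)) : Hof p g = Hof p f := by
  rw [Hof, funext hg, pmap_comp, ent_pmap_of_injective he, Hof]

lemma Hof_comp_of_semiconj [Fintype α'] [Fintype β] [Fintype β'] {E : α' → α} (hE : Injective E)
    {p : α → ℝ} (hp : ∀ a, p a ≠ 0 → a ∈ Set.range E) {f : α → β} {f' : α' → β'}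
    {e : β' → β} (he : Injective e) (hf : ∀ a', f (E a') = e (f' a')) :
    Hof (fun a' => p (E a')) f' = Hof p f :=
  calc Hof (fun a' => p (E a')) f' = Hof (fun a' => p (E a')) fun a' => f (E a') :=
        (Hof_comp_of_injective _ he hf).symm
    _ = Hof p f := by rw [Hof, Hof, pmap_comp_of_injective hE hp]

lemma ent_mul_kernel [Fintype β] [Fintype γ] (w : β → ℝ) (ν : β → γ → ℝ)
    (hν : ∀ b, w b ≠ 0 → ∑ c, ν b c = 1) :
    ent (fun z : β × γ => w z.1 * ν z.1 z.2) = ent w + ∑ b, w b * ent (ν b) := by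
  unfold ent
  rw [Fintype.sum_prod_type]
  have fiber : ∀ b, ∑ c, w b * ν b c * Real.log (w b * ν b c)
      = w b * Real.log (w b) + w b * ∑ c, ν b c * Real.log (ν b c) := by
    intro b
    by_cases hw : w b = 0
    · simp [hw]
    have hterm : ∀ c, w b * ν b c * Real.log (w b * ν b c)
        = ν b c * (w b * Real.log (w b)) + w b * (ν b c * Real.log (ν b c)) := by
      intro c
      by_cases hc : ν b c = 0
      · simp [hc]
      · rw [Real.log_mul hw hc]; ring
    rw [Finset.sum_congr rfl fun c _ => hterm c, Finset.sum_add_distrib, ← Finset.sum_mul,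
      hν b hw, ← Finset.mul_sum, one_mul]
  simp only [fiber, Finset.sum_add_distrib, mul_neg, Finset.sum_neg_distrib]
  ring

/-- The conditional entropy `H(g | f = b)`. -/
noncomputable def condEntAt [Fintype β] [Fintype γ] (p : α → ℝ) (f : α → β) (g : α → γ)
    (b : β) : ℝ :=
  ent fun c => pmap (fun a => (f a, g a)) p (b, c) / pmap f p b

lemma pmap_mul_div_pmap_pair [Fintype β] [Fintype γ] {p : α → ℝ} (hp : ∀ a, 0 ≤ p a)
    (f : α → β) (g : α → γ) (b : β) (c : γ) :
    pmap f p b * (pmap (fun a => (f a, g a)) p (b, c) / pmap f p b)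
      = pmap (fun a => (f a, g a)) p (b, c) := by
  by_cases hb : pmap f p b = 0
  · rw [hb, zero_mul]
    exact (le_antisymm (hb ▸ pmap_pair_le hp f g b c) (pmap_nonneg hp _ _)).symm
  · field_simp

lemma Hof_pair_chain_rule [Fintype β] [Fintype γ] {p : α → ℝ} (hp : ∀ a, 0 ≤ p a) (f : α → β)
    (g : α → γ) :
    Hof p (fun a => (f a, g a)) = Hof p f + ∑ b, pmap f p b * condEntAt p f g b := by
  set P := pmap (fun a => (f a, g a)) p
  have hmarg : ∀ b, ∑ c, P (b, c) = pmap f p b := fun b => by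
    rw [← pmap_fst_apply, ← pmap_comp]
  have hP : P = fun z => pmap f p z.1 * (P (z.1, z.2) / pmap f p z.1) :=
    funext fun z => (pmap_mul_div_pmap_pair hp f g z.1 z.2).symm
  change ent P = _
  rw [hP]
  exact ent_mul_kernel (pmap f p) (fun b c => P (b, c) / pmap f p b) fun b hb => by
    rw [← Finset.sum_div, hmarg, div_self hb]

lemma condEntAt_of_mul_comp [Fintype β] [Fintype γ] {p p' : α → ℝ} {f : α → β} {θ : β → ℝ}
    (hp' : ∀ a, p' a = θ (f a) * p a) (g : α → γ) {b : β} (hb : θ b ≠ 0) :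
    condEntAt p' f g b = condEntAt p f g b := by
  unfold condEntAt
  congr 1
  funext c
  rw [pmap_mul_comp (φ := fun z : β × γ => θ z.1) hp', pmap_mul_comp hp', mul_div_mul_left _ _ hb]

lemma CondIndep.comp_of_semiconj [Fintype α'] [Fintype β] [Fintype β'] [Fintype γ] [Fintype σ]
    {γ' σ' : Type*} [Fintype γ'] [Fintype σ'] {p : α → ℝ} {f : α → β} {g : α → γ} {m : α → σ}
    (h : CondIndep p f g m) {E : α' → α} (hE : Injective E) (hp : ∀ a, p a ≠ 0 → a ∈ Set.range E)
    {f' : α' → β'} {g' : α' → γ'} {m' : α' → σ'} {ef : β' → β} {eg : γ' → γ} {em : σ' → σ}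
    (hef : Injective ef) (heg : Injective eg) (hem : Injective em)
    (hf : ∀ a', f (E a') = ef (f' a')) (hg : ∀ a', g (E a') = eg (g' a'))
    (hm : ∀ a', m (E a') = em (m' a')) :
    CondIndep (fun a' => p (E a')) f' g' m' := by
  intro b c s
  rw [pmap_apply_of_semiconj hE hp (hef.prodMap (heg.prodMap hem))
      (f := fun a => (f a, g a, m a)) fun a' => by simp [hf, hg, hm],
    pmap_apply_of_semiconj hE hp hem hm,
    pmap_apply_of_semiconj hE hp (hef.prodMap hem) (f := fun a => (f a, m a))
      fun a' => by simp [hf, hm],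
    pmap_apply_of_semiconj hE hp (heg.prodMap hem) (f := fun a => (g a, m a))
      fun a' => by simp [hg, hm]]
  exact h (ef b) (eg c) (em s)

end Entropy

section Caratheodory

variable {ι E : Type*} [Fintype ι] [AddCommGroup E] [Module ℝ E]

lemma sum_pmap_smul {κ : Type*} [Fintype κ] (g : κ → ι) (w : κ → ℝ) (v : ι → E) :
    ∑ i, pmap g w i • v i = ∑ j, w j • v (g j) := by
  unfold pmap
  simp_rw [Finset.sum_smul, ite_smul, zero_smul]
  rw [Finset.sum_comm]
  simp

/-- Carathéodory's theorem, in weight form. -/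
theorem exists_sparse_weights [FiniteDimensional ℝ E] {m : ι → ℝ} (hm0 : ∀ i, 0 ≤ m i)
    (hm1 : ∑ i, m i = 1) (v : ι → E) :
    ∃ l : ι → ℝ, (∀ i, 0 ≤ l i) ∧ (∀ i, m i = 0 → l i = 0) ∧
      ∑ i, l i • v i = ∑ i, m i • v i ∧
      (Finset.univ.filter fun i => l i ≠ 0).card ≤ Module.finrank ℝ E + 1 := by
  have hsupp : ∑ i ∈ Finset.univ.filter (fun i => m i ≠ 0), m i • v i = ∑ i, m i • v i :=
    Finset.sum_subset (Finset.subset_univ _) fun i _ hi => by simp_all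
  have hx : ∑ i, m i • v i ∈ convexHull ℝ (v '' {i | m i ≠ 0}) := by
    rw [← hsupp]
    refine (convex_convexHull ℝ _).sum_mem (fun i _ => hm0 i) ?_ fun i hi =>
      subset_convexHull ℝ _ ⟨i, by simpa using hi, rfl⟩
    rw [Finset.sum_filter_ne_zero, hm1]
  obtain ⟨κ, _, z, w, hz, hai, hw0, -, hwz⟩ := eq_pos_convex_span_of_mem_convexHull hx
  choose g hgm hgv using fun j => hz ⟨j, rfl⟩
  refine ⟨pmap g w, pmap_nonneg (fun j => (hw0 j).le) g, fun i hi => ?_, ?_, ?_⟩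
  · exact Finset.sum_eq_zero fun j _ => if_neg fun (hj : g j = i) => hgm j (hj ▸ hi)
  · rw [sum_pmap_smul, ← hwz]
    simp only [hgv]
  · calc (Finset.univ.filter fun i => pmap g w i ≠ 0).card
        ≤ (Finset.univ.image g).card := Finset.card_le_card fun i hi => by
          by_contra hni
          refine (Finset.mem_filter.1 hi).2 (Finset.sum_eq_zero fun j _ => if_neg ?_)
          exact fun hj => hni (Finset.mem_image.2 ⟨j, Finset.mem_univ j, hj⟩)
      _ ≤ Fintype.card κ := Finset.card_image_le
      _ ≤ Module.finrank ℝ (vectorSpan ℝ (Set.range z)) + 1 := hai.card_le_finrank_succ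
      _ ≤ Module.finrank ℝ E + 1 := Nat.add_le_add_right (Submodule.finrank_le _) 1

end Caratheodory

section JointEntropies

variable {𝒰 𝒰' : Fin K → Type} [∀ k, Fintype (𝒰 k)] [∀ k, Fintype (𝒰' k)]

/-- The joint entropy `H(X_S, U_T)`. -/
noncomputable def entXU (q : ((∀ k, 𝒰 k) × (∀ k, 𝒳 k)) → ℝ) (S T : Finset (Fin K)) : ℝ :=
  Hof q fun w => (restr S w.2, restr T w.1)

def restrOfSubset {𝒯 : Fin K → Type} {A C : Finset (Fin K)} (h : A ⊆ C)
    (u : ∀ k : {k // k ∈ C}, 𝒯 k.1) : ∀ k : {k // k ∈ A}, 𝒯 k.1 :=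
  fun k => u ⟨k.1, h k.2⟩

variable (q : ((∀ k, 𝒰 k) × (∀ k, 𝒳 k)) → ℝ)

lemma Hof_restr_empty {β : Type*} [Fintype β] (f : ((∀ k, 𝒰 k) × (∀ k, 𝒳 k)) → β) :
    Hof q (fun w => (restr ∅ w.2, f w)) = Hof q f := by
  have hempty : ∀ x : ∀ k : {k // k ∈ (∅ : Finset (Fin K))}, 𝒳 k.1,
      x = fun k => absurd k.2 (Finset.notMem_empty _) :=
    fun x => funext fun k => absurd k.2 (Finset.notMem_empty _)
  exact Hof_comp_of_injective q (Prod.mk_right_injective _) fun w => by rw [hempty (restr ∅ w.2)]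

lemma Hof_restr_restr (S A B : Finset (Fin K)) :
    Hof q (fun w => (restr S w.2, restr A w.1, restr B w.1)) = entXU q S (A ∪ B) := by
  refine Hof_comp_of_injective q (f := fun w => (restr S w.2, restr (A ∪ B) w.1))
    (e := fun z => (z.1, restrOfSubset Finset.subset_union_left z.2,
      restrOfSubset Finset.subset_union_right z.2)) ?_ fun w => rfl
  rintro ⟨x, u⟩ ⟨x', u'⟩ h
  simp only [Prod.mk.injEq] at h
  obtain ⟨rfl, hA, hB⟩ := h
  refine Prod.ext rfl (funext fun k => ?_)
  rcases Finset.mem_union.1 k.2 with hk | hk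
  · exact congrFun hA ⟨k.1, hk⟩
  · exact congrFun hB ⟨k.1, hk⟩

lemma CMI_restr_eq {A' A : Finset (Fin K)} (h : A' ⊆ A) :
    CMI q (fun w => restr A' w.2) (fun w => restr A' w.1) (fun w => restr (A \ A') w.1)
      = entXU q A' (A \ A') + entXU q ∅ A - entXU q A' A - entXU q ∅ (A \ A') := by
  rw [CMI, ← Hof_restr_empty q (fun w => (restr A' w.1, restr (A \ A') w.1)),
    ← Hof_restr_empty q (fun w => restr (A \ A') w.1), Hof_restr_restr, Hof_restr_restr,
    Finset.union_sdiff_of_subset h]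
  rfl

lemma MI_restr_eq (A B : Finset (Fin K)) :
    MI q (fun w => restr A w.1) (fun w => restr B w.1)
      = entXU q ∅ A + entXU q ∅ B - entXU q ∅ (A ∪ B) := by
  rw [MI, ← Hof_restr_empty q (fun w => restr A w.1), ← Hof_restr_empty q (fun w => restr B w.1),
    ← Hof_restr_empty q (fun w => (restr A w.1, restr B w.1)), Hof_restr_restr]
  rfl

variable {q}

/-- In the inequalities of the inner bound the auxiliary index sets enter only through
`T ↦ H(X_S, U_T)` evaluated at `A \ A'` and `A` (both twice, with opposite signs) or at disjoint
`A`, `B` and `A ∪ B`, so shifting these entropies by a function of `T` additive on disjoint sets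
changes nothing. -/
lemma InnerIneqM.of_entXU_eq_add {q' : ((∀ k, 𝒰' k) × (∀ k, 𝒳 k)) → ℝ}
    (c : Finset (Fin K) → ℝ) (hc : ∀ A B, Disjoint A B → c (A ∪ B) = c A + c B)
    (hent : ∀ S T, entXU q' S T = entXU q S T + c T)
    {t : (Omega K → ℝ) × (Fin K → ℝ)} (ht : InnerIneqM q t) : InnerIneqM q' t := by
  have hCMI : ∀ {A' A : Finset (Fin K)}, A' ⊆ A →
      CMI q' (fun w => restr A' w.2) (fun w => restr A' w.1) (fun w => restr (A \ A') w.1)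
        = CMI q (fun w => restr A' w.2) (fun w => restr A' w.1)
          (fun w => restr (A \ A') w.1) := fun h => by
    rw [CMI_restr_eq q h, CMI_restr_eq q' h, hent, hent, hent, hent]
    ring
  intro AB
  obtain ⟨Aa, Ab, Ba, Bb, hAb, hAa, hBb, hBa, hA, hB, hμ⟩ := ht AB
  refine ⟨Aa, Ab, Ba, Bb, hAb, hAa, hBb, hBa, fun A' hA' hne => ?_, fun B' hB' hne => ?_, ?_⟩
  · exact (hCMI hA').symm ▸ hA A' hA' hne
  · exact (hCMI hB').symm ▸ hB B' hB' hne
  · have hdisj : Disjoint Ab Bb :=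
      AB.2.2.2.mono (hAb.trans hAa) (hBb.trans hBa)
    rw [MI_restr_eq] at hμ ⊢
    rw [hent, hent, hent, hc Ab Bb hdisj]
    linarith

end JointEntropies

section Markov

variable {𝒰 : Fin K → Type} [∀ k, Fintype (𝒰 k)]

lemma pi_eq_of_eq_of_forall_ne {β : Fin K → Type*} {f g : ∀ j, β j} (k : Fin K) (hk : f k = g k)
    (hne : ∀ j : {j // j ≠ k}, f j = g j) : f = g :=
  (Equiv.piSplitAt k β).injective (Prod.ext hk (funext hne))

def dropU (k : Fin K) (w : (∀ k, 𝒰 k) × (∀ k, 𝒳 k)) :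
    (∀ j : {j : Fin K // j ≠ k}, 𝒰 j.1) × (∀ k, 𝒳 k) :=
  (fun j => w.1 j.1, w.2)

def splitU (k : Fin K) : ((∀ k, 𝒰 k) × (∀ k, 𝒳 k)) ≃
    𝒰 k × ((∀ j : {j : Fin K // j ≠ k}, 𝒰 j.1) × (∀ k, 𝒳 k)) :=
  ((Equiv.piSplitAt k 𝒰).prodCongr (Equiv.refl _)).trans (Equiv.prodAssoc _ _ _)

lemma splitU_apply (k : Fin K) (w : (∀ k, 𝒰 k) × (∀ k, 𝒳 k)) :
    splitU k w = (w.1 k, dropU k w) := rfl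

lemma splitU_symm_apply_fst (k : Fin K) (b : 𝒰 k)
    (y : (∀ j : {j : Fin K // j ≠ k}, 𝒰 j.1) × (∀ k, 𝒳 k)) :
    ((splitU k).symm (b, y)).1 k = b :=
  congrArg Prod.fst ((splitU_apply k _).symm.trans ((splitU k).apply_symm_apply (b, y)))

lemma dropU_splitU_symm (k : Fin K) (b : 𝒰 k)
    (y : (∀ j : {j : Fin K // j ≠ k}, 𝒰 j.1) × (∀ k, 𝒳 k)) :
    dropU k ((splitU k).symm (b, y)) = y :=
  congrArg Prod.snd ((splitU_apply k _).symm.trans ((splitU k).apply_symm_apply (b, y)))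

variable (q : ((∀ k, 𝒰 k) × (∀ k, 𝒳 k)) → ℝ)

lemma pmap_dropU_apply (k : Fin K) (y : (∀ j : {j : Fin K // j ≠ k}, 𝒰 j.1) × (∀ k, 𝒳 k)) :
    pmap (dropU k) q y = ∑ b, q ((splitU k).symm (b, y)) := by
  rw [show dropU k = fun w => (splitU k w).2 from rfl, pmap_comp, pmap_snd_apply]
  exact Finset.sum_congr rfl fun b _ => pmap_equiv_apply _ _ _

lemma markovTriple_injective (k : Fin K) :
    Injective fun w : (∀ k, 𝒰 k) × (∀ k, 𝒳 k) =>
      (w.1 k, (fun j : {j : Fin K // j ≠ k} => w.2 j.1, fun j : {j : Fin K // j ≠ k} => w.1 j.1),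
        w.2 k) := by
  intro w w' h
  simp only [Prod.mk.injEq] at h
  obtain ⟨hu, ⟨hx', hu'⟩, hx⟩ := h
  exact Prod.ext (pi_eq_of_eq_of_forall_ne k hu (congrFun hu'))
    (pi_eq_of_eq_of_forall_ne k hx (congrFun hx'))

lemma pmap_markovRest_apply (k : Fin K) (w : (∀ k, 𝒰 k) × (∀ k, 𝒳 k)) :
    pmap (fun w : (∀ k, 𝒰 k) × (∀ k, 𝒳 k) =>
        ((fun j : {j : Fin K // j ≠ k} => w.2 j.1, fun j : {j : Fin K // j ≠ k} => w.1 j.1), w.2 k))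
      q ((fun j : {j : Fin K // j ≠ k} => w.2 j.1, fun j : {j : Fin K // j ≠ k} => w.1 j.1), w.2 k)
      = pmap (dropU k) q (dropU k w) := by
  have he : Injective fun y : (∀ j : {j : Fin K // j ≠ k}, 𝒰 j.1) × (∀ k, 𝒳 k) =>
      ((fun j : {j : Fin K // j ≠ k} => y.2 j.1, y.1), y.2 k) := by
    intro y y' h
    simp only [Prod.mk.injEq] at h
    obtain ⟨⟨hx', hu⟩, hx⟩ := h
    exact Prod.ext hu (pi_eq_of_eq_of_forall_ne k hx (congrFun hx'))
  rw [← pmap_apply_of_injective he (pmap (dropU k) q), ← pmap_comp]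
  rfl

lemma condIndep_iff (k : Fin K) :
    CondIndep q (fun w => w.1 k)
        (fun w => (fun j : {j : Fin K // j ≠ k} => w.2 j.1,
          fun j : {j : Fin K // j ≠ k} => w.1 j.1))
        (fun w => w.2 k) ↔
      ∀ w, q w * pmap (fun w => w.2 k) q (w.2 k)
        = pmap (fun w => (w.1 k, w.2 k)) q (w.1 k, w.2 k) * pmap (dropU k) q (dropU k w) := by
  constructor
  · intro h w
    have hw := h (w.1 k) (fun j => w.2 j.1, fun j => w.1 j.1) (w.2 k)
    rwa [pmap_apply_of_injective (markovTriple_injective k), pmap_markovRest_apply] at hw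
  · rintro h b ⟨x', u'⟩ s
    set w : (∀ k, 𝒰 k) × (∀ k, 𝒳 k) :=
      ((Equiv.piSplitAt k 𝒰).symm (b, u'), (Equiv.piSplitAt k 𝒳).symm (s, x'))
    have hb : w.1 k = b := by simp [w]
    have hs : w.2 k = s := by simp [w]
    have hx' : (fun j : {j : Fin K // j ≠ k} => w.2 j.1) = x' := funext fun j => by simp [w, j.2]
    have hu' : (fun j : {j : Fin K // j ≠ k} => w.1 j.1) = u' := funext fun j => by simp [w, j.2]
    have hw := h w
    rw [← pmap_apply_of_injective (markovTriple_injective k) q w, ← pmap_markovRest_apply] at hw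
    rwa [hb, hs, hx', hu'] at hw

end Markov

section Reweight

variable {𝒰 : Fin K → Type} [∀ k, Fintype (𝒰 k)]

def reweight (q : ((∀ k, 𝒰 k) × (∀ k, 𝒳 k)) → ℝ) (k0 : Fin K) (θ : 𝒰 k0 → ℝ) :
    ((∀ k, 𝒰 k) × (∀ k, 𝒳 k)) → ℝ :=
  fun w => θ (w.1 k0) * q w

variable {q : ((∀ k, 𝒰 k) × (∀ k, 𝒳 k)) → ℝ} {k0 : Fin K} {θ : 𝒰 k0 → ℝ}

lemma reweight_nonneg (hq0 : ∀ w, 0 ≤ q w) (hθ0 : ∀ b, 0 ≤ θ b) (w : (∀ k, 𝒰 k) × (∀ k, 𝒳 k)) :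
    0 ≤ reweight q k0 θ w :=
  mul_nonneg (hθ0 _) (hq0 w)

lemma pmap_reweight_apply {β : Type*} {f : ((∀ k, 𝒰 k) × (∀ k, 𝒳 k)) → β} (φ : β → 𝒰 k0)
    (hf : ∀ w, φ (f w) = w.1 k0) (b : β) :
    pmap f (reweight q k0 θ) b = θ (φ b) * pmap f q b :=
  pmap_mul_comp (p' := reweight q k0 θ) (f := f) (φ := fun b => θ (φ b))
    (fun w => by rw [hf]; rfl) b

/-- `hθ` says that the reweighting preserves the law of `X_k0`; the Markov condition at `k0`
propagates this to the law of everything but `U_k0`. -/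
lemma pmap_dropU_reweight (hq0 : ∀ w, 0 ≤ q w)
    (hM : ∀ w, q w * pmap (fun w => w.2 k0) q (w.2 k0)
      = pmap (fun w => (w.1 k0, w.2 k0)) q (w.1 k0, w.2 k0) * pmap (dropU k0) q (dropU k0 w))
    (hθ : ∀ x, ∑ b, θ b * pmap (fun w => (w.1 k0, w.2 k0)) q (b, x)
      = pmap (fun w => w.2 k0) q x) :
    pmap (dropU k0) (reweight q k0 θ) = pmap (dropU k0) q := by
  funext y
  have hwx : ∀ b, ((splitU k0).symm (b, y)).2 k0 = y.2 k0 := fun b =>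
    congrArg (fun y => y.2 k0) (dropU_splitU_symm k0 b y)
  have hMw : ∀ b, q ((splitU k0).symm (b, y)) * pmap (fun w => w.2 k0) q (y.2 k0)
      = pmap (fun w => (w.1 k0, w.2 k0)) q (b, y.2 k0) * pmap (dropU k0) q y := fun b => by
    have h := hM ((splitU k0).symm (b, y))
    rwa [hwx, splitU_symm_apply_fst, dropU_splitU_symm] at h
  rw [pmap_dropU_apply]
  change ∑ b, θ (((splitU k0).symm (b, y)).1 k0) * q ((splitU k0).symm (b, y)) = _
  simp only [splitU_symm_apply_fst]
  by_cases hx : pmap (fun w => w.2 k0) q (y.2 k0) = 0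
  · have hzero : ∀ b, q ((splitU k0).symm (b, y)) = 0 := fun b => by
      have hle := apply_le_pmap hq0 (fun w => w.2 k0) ((splitU k0).symm (b, y))
      rw [hwx, hx] at hle
      exact le_antisymm hle (hq0 _)
    simp [pmap_dropU_apply, hzero]
  · refine mul_right_cancel₀ hx ?_
    calc (∑ b, θ b * q ((splitU k0).symm (b, y))) * pmap (fun w => w.2 k0) q (y.2 k0)
        = ∑ b, θ b * (q ((splitU k0).symm (b, y)) * pmap (fun w => w.2 k0) q (y.2 k0)) := by
          rw [Finset.sum_mul]
          simp only [mul_assoc]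
      _ = (∑ b, θ b * pmap (fun w => (w.1 k0, w.2 k0)) q (b, y.2 k0)) * pmap (dropU k0) q y := by
          rw [Finset.sum_mul]
          simp only [hMw, mul_assoc]
      _ = pmap (dropU k0) q y * pmap (fun w => w.2 k0) q (y.2 k0) := by
          rw [hθ, mul_comm]

lemma pmap_reweight_comp_dropU (hdrop : pmap (dropU k0) (reweight q k0 θ) = pmap (dropU k0) q)
    {β : Type*} [Fintype β] (H : (∀ j : {j : Fin K // j ≠ k0}, 𝒰 j.1) × (∀ k, 𝒳 k) → β) :
    pmap (fun w => H (dropU k0 w)) (reweight q k0 θ) = pmap (fun w => H (dropU k0 w)) q := by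
  rw [pmap_comp, hdrop, ← pmap_comp]

lemma condIndep_reweight (hq0 : ∀ w, 0 ≤ q w)
    (hM : ∀ k, CondIndep q (fun w => w.1 k)
      (fun w => (fun j : {j : Fin K // j ≠ k} => w.2 j.1,
        fun j : {j : Fin K // j ≠ k} => w.1 j.1)) (fun w => w.2 k))
    (hθ : ∀ x, ∑ b, θ b * pmap (fun w => (w.1 k0, w.2 k0)) q (b, x)
      = pmap (fun w => w.2 k0) q x) (k : Fin K) :
    CondIndep (reweight q k0 θ) (fun w => w.1 k)
      (fun w => (fun j : {j : Fin K // j ≠ k} => w.2 j.1,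
        fun j : {j : Fin K // j ≠ k} => w.1 j.1)) (fun w => w.2 k) := by
  have hdrop := pmap_dropU_reweight hq0 ((condIndep_iff q k0).1 (hM k0)) hθ
  have hX : pmap (fun w => w.2 k) (reweight q k0 θ) = pmap (fun w => w.2 k) q :=
    pmap_reweight_comp_dropU hdrop fun y => y.2 k
  rw [condIndep_iff]
  intro w
  have hMk := (condIndep_iff q k).1 (hM k) w
  by_cases hk : k = k0
  · subst hk
    rw [hX, hdrop, pmap_reweight_apply Prod.fst fun _ => rfl]
    change θ (w.1 k) * q w * _ = _
    rw [mul_assoc, hMk]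
    ring
  · have hUX : pmap (fun w => (w.1 k, w.2 k)) (reweight q k0 θ)
        = pmap (fun w => (w.1 k, w.2 k)) q :=
      pmap_reweight_comp_dropU hdrop fun y => (y.1 ⟨k, hk⟩, y.2 k)
    rw [hX, hUX, pmap_reweight_apply (fun y => y.1 ⟨k0, Ne.symm hk⟩) fun _ => rfl]
    change θ (w.1 k0) * q w * _ = _ * (θ (w.1 k0) * _)
    rw [mul_assoc, hMk]
    ring

lemma InnerWitnessM.reweight {p : (∀ k, 𝒳 k) → ℝ} (hq : InnerWitnessM p q)
    (hθ0 : ∀ b, 0 ≤ θ b)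
    (hθ : ∀ x, ∑ b, θ b * pmap (fun w => (w.1 k0, w.2 k0)) q (b, x)
      = pmap (fun w => w.2 k0) q x) :
    InnerWitnessM p (reweight q k0 θ) := by
  obtain ⟨⟨hq0, hq1⟩, hp, hM⟩ := hq
  have hdrop := pmap_dropU_reweight hq0 ((condIndep_iff q k0).1 (hM k0)) hθ
  refine ⟨⟨reweight_nonneg hq0 hθ0, ?_⟩, ?_, condIndep_reweight hq0 hM hθ⟩
  · rw [← sum_pmap (dropU k0), hdrop, sum_pmap, hq1]
  · rw [← hp]
    exact pmap_reweight_comp_dropU hdrop Prod.snd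

lemma entXU_reweight_of_notMem (hdrop : pmap (dropU k0) (reweight q k0 θ) = pmap (dropU k0) q)
    (S : Finset (Fin K)) {T : Finset (Fin K)} (hT : k0 ∉ T) :
    entXU (reweight q k0 θ) S T = entXU q S T := by
  have h := pmap_reweight_comp_dropU hdrop fun y =>
    (restr S y.2, fun k : {k // k ∈ T} => y.1 ⟨k.1, fun h => hT (h ▸ k.2)⟩)
  exact congrArg ent h

lemma entXU_eq_of_mem (hq0 : ∀ w, 0 ≤ q w) (S : Finset (Fin K)) {T : Finset (Fin K)}
    (hT : k0 ∈ T) :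
    entXU q S T = Hof q (fun w => w.1 k0) + ∑ b, pmap (fun w => w.1 k0) q b *
      condEntAt q (fun w => w.1 k0) (fun w => (restr S w.2, restr T w.1)) b := by
  rw [entXU, ← Hof_pair_chain_rule hq0]
  exact (Hof_comp_of_injective q (f := fun w => (restr S w.2, restr T w.1))
    (e := fun z : (∀ k : {k // k ∈ S}, 𝒳 k.1) × (∀ k : {k // k ∈ T}, 𝒰 k.1) =>
      (z.2 ⟨k0, hT⟩, z)) (fun z z' h => congrArg Prod.snd h) fun w => rfl).symm

lemma entXU_reweight_of_mem (hq0 : ∀ w, 0 ≤ q w) (hθ0 : ∀ b, 0 ≤ θ b) (S : Finset (Fin K))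
    {T : Finset (Fin K)} (hT : k0 ∈ T) :
    entXU (reweight q k0 θ) S T = Hof (reweight q k0 θ) (fun w => w.1 k0) +
      ∑ b, θ b * pmap (fun w => w.1 k0) q b *
        condEntAt q (fun w => w.1 k0) (fun w => (restr S w.2, restr T w.1)) b := by
  rw [entXU_eq_of_mem (reweight_nonneg hq0 hθ0) S hT]
  congr 1
  refine Finset.sum_congr rfl fun b _ => ?_
  rw [pmap_reweight_apply id fun _ => rfl]
  by_cases hb : θ b = 0
  · simp [hb]
  · rw [condEntAt_of_mul_comp (p' := reweight q k0 θ) (fun _ => rfl) _ hb, id]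

end Reweight

section CardinalityStep

lemma card_finset_mem_le (k0 : Fin K) :
    Fintype.card {T : Finset (Fin K) // k0 ∈ T} ≤ 2 ^ (K - 1) := by
  have hinj : Injective fun T : {T : Finset (Fin K) // k0 ∈ T} => T.1.subtype (· ≠ k0) := by
    intro T T' h
    refine Subtype.ext (Finset.ext fun j => ?_)
    by_cases hj : j = k0
    · subst hj
      exact iff_of_true T.2 T'.2
    · simpa [hj] using congrArg (⟨j, hj⟩ ∈ ·) h
  calc Fintype.card {T : Finset (Fin K) // k0 ∈ T}
      ≤ Fintype.card (Finset {j : Fin K // j ≠ k0}) := Fintype.card_le_of_injective _ hinj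
    _ = 2 ^ (K - 1) := by simp [Fintype.card_finset]

lemma card_finset_prod_finset_mem_add_one_le (k0 : Fin K) :
    Fintype.card (Finset (Fin K) × {T : Finset (Fin K) // k0 ∈ T}) + 1 ≤ 4 ^ K := by
  obtain ⟨n, rfl⟩ : ∃ n, K = n + 1 := Nat.exists_eq_add_one.2 k0.pos
  have hcard := card_finset_mem_le k0
  rw [Nat.add_sub_cancel] at hcard
  rw [Fintype.card_prod, Fintype.card_finset, Fintype.card_fin]
  have h4 : (4 : ℕ) ^ (n + 1) = 2 ^ (n + 1) * 2 ^ n * 2 := by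
    rw [show (4 : ℕ) = 2 * 2 from rfl, mul_pow, pow_succ 2 n]
    ring
  have hpos : 1 ≤ 2 ^ (n + 1) * 2 ^ n := Nat.one_le_iff_ne_zero.2 (by positivity)
  have := Nat.mul_le_mul_left (2 ^ (n + 1)) hcard
  omega

lemma finrank_caratheodory_add_one_le (k0 : Fin K) :
    Module.finrank ℝ ((𝒳 k0 → ℝ) × (Finset (Fin K) × {T : Finset (Fin K) // k0 ∈ T} → ℝ)) + 1
      ≤ Fintype.card (𝒳 k0) + 4 ^ K := by
  rw [Module.finrank_prod, Module.finrank_fintype_fun_eq_card,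
    Module.finrank_fintype_fun_eq_card, add_assoc]
  exact Nat.add_le_add_left (card_finset_prod_finset_mem_add_one_le k0) _

variable {𝒰 : Fin K → Type} [∀ k, Fintype (𝒰 k)]

lemma exists_sparse_reweighting {q : ((∀ k, 𝒰 k) × (∀ k, 𝒳 k)) → ℝ} (hq : IsPMF q)
    (k0 : Fin K) :
    ∃ θ : 𝒰 k0 → ℝ, (∀ b, 0 ≤ θ b) ∧
      (Finset.univ.filter fun b => θ b ≠ 0).card ≤ Fintype.card (𝒳 k0) + 4 ^ K ∧
      (∀ x, ∑ b, θ b * pmap (fun w => (w.1 k0, w.2 k0)) q (b, x)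
        = pmap (fun w => w.2 k0) q x) ∧
      ∀ S T, k0 ∈ T →
        ∑ b, θ b * pmap (fun w => w.1 k0) q b *
            condEntAt q (fun w => w.1 k0) (fun w => (restr S w.2, restr T w.1)) b
          = ∑ b, pmap (fun w => w.1 k0) q b *
            condEntAt q (fun w => w.1 k0) (fun w => (restr S w.2, restr T w.1)) b := by
  set m := pmap (fun w => w.1 k0) q
  set P := pmap (fun w => (w.1 k0, w.2 k0)) q
  set h : 𝒰 k0 → Finset (Fin K) × {T : Finset (Fin K) // k0 ∈ T} → ℝ := fun b i =>
    condEntAt q (fun w => w.1 k0) (fun w => (restr i.1 w.2, restr i.2.1 w.1)) b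
  obtain ⟨l, hl0, hlm, hlv, hlcard⟩ := exists_sparse_weights (m := m) (pmap_nonneg hq.1 _)
    (by rw [sum_pmap]; exact hq.2) fun b => ((fun x => P (b, x) / m b), h b)
  have hlθ : ∀ b, l b / m b * m b = l b := fun b => by
    by_cases hb : m b = 0
    · simp [hb, hlm b hb]
    · field_simp
  refine ⟨fun b => l b / m b, fun b => div_nonneg (hl0 b) (pmap_nonneg hq.1 _ b), ?_,
    fun x => ?_, fun S T hT => ?_⟩
  · refine (Finset.card_le_card fun b hb => ?_).trans
      (hlcard.trans (finrank_caratheodory_add_one_le k0))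
    simp only [Finset.mem_filter, Finset.mem_univ, true_and] at hb ⊢
    exact fun hl => hb (by rw [hl, zero_div])
  · have hx := congrFun (congrArg Prod.fst hlv) x
    simp only [Prod.fst_sum, Prod.smul_fst, Finset.sum_apply, Pi.smul_apply, smul_eq_mul,
      m, P, pmap_mul_div_pmap_pair hq.1] at hx
    rw [show pmap (fun w => w.2 k0) q x = ∑ b, P (b, x) by rw [← pmap_snd_apply, ← pmap_comp],
      ← hx]
    exact Finset.sum_congr rfl fun b _ => by ring
  · have hi := congrFun (congrArg Prod.snd hlv) (S, ⟨T, hT⟩)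
    simp only [Prod.snd_sum, Prod.smul_snd, Finset.sum_apply, Pi.smul_apply, smul_eq_mul] at hi
    simp only [hlθ]
    exact hi

end CardinalityStep

section Iteration

variable {𝒰 : Fin K → Type} [∀ k, Fintype (𝒰 k)] {p : (∀ k, 𝒳 k) → ℝ}
  {q : ((∀ k, 𝒰 k) × (∀ k, 𝒳 k)) → ℝ}

noncomputable def supportU (q : ((∀ k, 𝒰 k) × (∀ k, 𝒳 k)) → ℝ) (k : Fin K) : Finset (𝒰 k) :=
  Finset.univ.filter fun b => pmap (fun w => w.1 k) q b ≠ 0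

lemma supportU_reweight_subset (hq0 : ∀ w, 0 ≤ q w) (k0 : Fin K) (θ : 𝒰 k0 → ℝ) (k : Fin K) :
    supportU (reweight q k0 θ) k ⊆ supportU q k :=
  Finset.monotone_filter_right _ fun _ _ hb h0 =>
    hb (pmap_eq_zero_of_imp hq0 (fun w hw => by simp [reweight, hw]) h0)

lemma exists_reweight (hq : InnerWitnessM p q) (k0 : Fin K) :
    ∃ θ : 𝒰 k0 → ℝ, (supportU (reweight q k0 θ) k0).card ≤ Fintype.card (𝒳 k0) + 4 ^ K ∧
      InnerWitnessM p (reweight q k0 θ) ∧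
      ∀ t, InnerIneqM q t → InnerIneqM (reweight q k0 θ) t := by
  obtain ⟨θ, hθ0, hcard, hθ, hent⟩ := exists_sparse_reweighting hq.1 k0
  have hq0 := hq.1.1
  have hdrop := pmap_dropU_reweight hq0 ((condIndep_iff q k0).1 (hq.2.2 k0)) hθ
  have hsub : supportU (reweight q k0 θ) k0 ⊆ Finset.univ.filter fun b => θ b ≠ 0 := by
    refine Finset.monotone_filter_right _ fun b _ hb hθb => hb ?_
    rw [pmap_reweight_apply id fun _ => rfl, id, hθb, zero_mul]
  set δ := Hof (reweight q k0 θ) (fun w => w.1 k0) - Hof q (fun w => w.1 k0)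
  have hc : ∀ A B : Finset (Fin K), Disjoint A B →
      (if k0 ∈ A ∪ B then δ else 0) = (if k0 ∈ A then δ else 0) + (if k0 ∈ B then δ else 0) := by
    intro A B hAB
    have : ¬(k0 ∈ A ∧ k0 ∈ B) := fun h => Finset.disjoint_left.1 hAB h.1 h.2
    by_cases ha : k0 ∈ A <;> by_cases hb : k0 ∈ B <;> simp_all
  have hshift : ∀ S T, entXU (reweight q k0 θ) S T = entXU q S T + if k0 ∈ T then δ else 0 := by
    intro S T
    split_ifs with hT
    · rw [entXU_reweight_of_mem hq0 hθ0 S hT, entXU_eq_of_mem hq0 S hT, hent S T hT]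
      ring
    · rw [entXU_reweight_of_notMem hdrop S hT, add_zero]
  exact ⟨θ, (Finset.card_le_card hsub).trans hcard, hq.reweight hθ0 hθ,
    fun t ht => ht.of_entXU_eq_add _ hc hshift⟩

lemma exists_witness_card_supportU_le (hq : InnerWitnessM p q)
    {t : (Omega K → ℝ) × (Fin K → ℝ)} (ht : InnerIneqM q t) (s : Finset (Fin K)) :
    ∃ q' : ((∀ k, 𝒰 k) × (∀ k, 𝒳 k)) → ℝ, InnerWitnessM p q' ∧ InnerIneqM q' t ∧
      ∀ k ∈ s, (supportU q' k).card ≤ Fintype.card (𝒳 k) + 4 ^ K := by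
  induction s using Finset.induction_on with
  | empty => exact ⟨q, hq, ht, by simp⟩
  | insert k0 s _ ih =>
    obtain ⟨q', hq', ht', hcard⟩ := ih
    obtain ⟨θ, hθcard, hqθ, hineq⟩ := exists_reweight hq' k0
    refine ⟨_, hqθ, hineq t ht', fun k hk => ?_⟩
    rcases Finset.mem_insert.1 hk with rfl | hk
    · exact hθcard
    · exact (Finset.card_le_card (supportU_reweight_subset hq'.1.1 k0 θ k)).trans (hcard k hk)

end Iteration

section Restriction

variable {𝒰 𝒱 : Fin K → Type} [∀ k, Fintype (𝒰 k)] [∀ k, Fintype (𝒱 k)]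

def liftU (ι : ∀ k, 𝒱 k → 𝒰 k) (w : (∀ k, 𝒱 k) × (∀ k, 𝒳 k)) : (∀ k, 𝒰 k) × (∀ k, 𝒳 k) :=
  (fun k => ι k (w.1 k), w.2)

variable {ι : ∀ k, 𝒱 k → 𝒰 k} {q : ((∀ k, 𝒰 k) × (∀ k, 𝒳 k)) → ℝ}

lemma liftU_injective (hι : ∀ k, Injective (ι k)) : Injective (liftU (𝒳 := 𝒳) ι) :=
  fun w w' h => by
    simp only [liftU, Prod.mk.injEq] at h
    exact Prod.ext (funext fun k => hι k (congrFun h.1 k)) h.2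

lemma InnerWitnessM.comp_liftU {p : (∀ k, 𝒳 k) → ℝ} (h : InnerWitnessM p q)
    (hι : ∀ k, Injective (ι k)) (hq : ∀ w, q w ≠ 0 → w ∈ Set.range (liftU ι)) :
    InnerWitnessM p fun w => q (liftU ι w) := by
  obtain ⟨⟨h0, h1⟩, hp, hM⟩ := h
  refine ⟨⟨fun w => h0 _, ?_⟩, ?_, fun k => ?_⟩
  · rw [← h1]
    exact Fintype.sum_of_injective _ (liftU_injective hι) _ _
      (fun a ha => not_not.1 fun hne => ha (hq a hne)) fun _ => rfl
  · rw [← hp]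
    exact pmap_comp_of_injective (liftU_injective hι) hq Prod.snd
  · exact (hM k).comp_of_semiconj (liftU_injective hι) hq (hι k)
      (injective_id.prodMap (Injective.piMap fun j => hι j.1)) injective_id
      (fun _ => rfl) (fun _ => rfl) (fun _ => rfl)

lemma InnerIneqM.comp_liftU {t : (Omega K → ℝ) × (Fin K → ℝ)} (h : InnerIneqM q t)
    (hι : ∀ k, Injective (ι k)) (hq : ∀ w, q w ≠ 0 → w ∈ Set.range (liftU ι)) :
    InnerIneqM (fun w => q (liftU ι w)) t :=
  h.of_entXU_eq_add 0 (fun _ _ _ => by simp) fun S T => by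
    rw [Pi.zero_apply, add_zero]
    exact Hof_comp_of_semiconj (liftU_injective hι) hq
      (f := fun w => (restr S w.2, restr T w.1)) (f' := fun w => (restr S w.2, restr T w.1))
      (injective_id.prodMap (Injective.piMap fun j : {k // k ∈ T} => hι j.1)) fun _ => rfl

end Restriction

section SupportEmbedding

variable {𝒰 : Fin K → Type} [∀ k, Fintype (𝒰 k)] {q : ((∀ k, 𝒰 k) × (∀ k, 𝒳 k)) → ℝ}

noncomputable def supportEmb (q : ((∀ k, 𝒰 k) × (∀ k, 𝒳 k)) → ℝ) (k : Fin K) :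
    Fin (supportU q k).card → 𝒰 k :=
  fun i => ((supportU q k).equivFin.symm i).1

lemma supportEmb_injective (k : Fin K) : Injective (supportEmb q k) :=
  Subtype.val_injective.comp (Equiv.injective _)

lemma mem_range_liftU_supportEmb (hq0 : ∀ w, 0 ≤ q w) {w : (∀ k, 𝒰 k) × (∀ k, 𝒳 k)}
    (hw : q w ≠ 0) :
    w ∈ Set.range (liftU (𝒱 := fun k => Fin (supportU q k).card) (supportEmb q)) := by
  have hmem : ∀ k, w.1 k ∈ supportU q k := fun k => Finset.mem_filter.2 ⟨Finset.mem_univ _,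
    (((hq0 w).lt_of_ne (Ne.symm hw)).trans_le (apply_le_pmap hq0 (fun w => w.1 k) w)).ne'⟩
  refine ⟨(fun k => (supportU q k).equivFin ⟨w.1 k, hmem k⟩, w.2),
    Prod.ext (funext fun k => ?_) rfl⟩
  change ((supportU q k).equivFin.symm ((supportU q k).equivFin ⟨w.1 k, hmem k⟩)).1 = w.1 k
  rw [Equiv.symm_apply_apply]

end SupportEmbedding

theorem multi_source_inner_bound_cardinality_general (p : (∀ k, 𝒳 k) → ℝ) :
    RiM p = RiMBounded p := by
  ext t
  constructor
  · rintro ⟨𝒰, _, q, hq, ht⟩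
    obtain ⟨q', hq', ht', hcard⟩ := exists_witness_card_supportU_le hq ht Finset.univ
    have hrange := fun w => mem_range_liftU_supportEmb (w := w) hq'.1.1
    exact ⟨fun k => (supportU q' k).card, fun k => hcard k (Finset.mem_univ k), _,
      hq'.comp_liftU supportEmb_injective hrange, ht'.comp_liftU supportEmb_injective hrange⟩
  · rintro ⟨c, -, q, hq, ht⟩
    exact ⟨fun k => Fin (c k), inferInstance, q, hq, ht⟩

/-- **Proposition 4 (cardinality bound for the multi-source inner bound):** the region `R_i`
is unchanged when each auxiliary `U_k` is required to take at most `|𝒳_k| + 4^K` values. -/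
theorem multi_source_inner_bound_cardinality (p : (∀ k, 𝒳 k) → ℝ) (hp : IsPMF p) :
    RiM p = RiMBounded p :=
  multi_source_inner_bound_cardinality_general p

end Biclustering
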